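/- arXiv:2410.19706 — 5 statements merged into one kernel-verified Lean document; each statement's English description precedes it below -/
import Mathlib

section
/- One-step invariant for the lower iterate (Part 1 of the proof of Theorem 1): assume f attains a unique global minimum over [a,b] at x* with a < x* < b (f(x*) < f(x) for all x ∈ [a,b], x ≠ x*). Let ε > 0 and 0 ≤ α ≤ ε/((b-a)·(1+k)·k). If x1, x2 ∈ [a,b] satisfy x1 < x2, x1 < x*, f(x2) - f(x1) < 0, and f(x1) - f(x*) > ε, then the updated point x1' = x1 - α·(x1 - x2)·(1 - F(x2,x1)) still satisfies x1' < x*. -/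
open Set Filter Topology

/-- The global gradient of `f`: `F x y = (f y - f x) / (y - x)`. -/
noncomputable def globalGrad (f : ℝ → ℝ) (x y : ℝ) : ℝ := (f y - f x) / (y - x)

/-- The Super Gradient Descent iteration with step `α` on `[a,b]`. -/
def IsSuGD (f : ℝ → ℝ) (a b α : ℝ) (x1 x2 : ℕ → ℝ) : Prop :=
  x1 0 = a ∧ x2 0 = b ∧ ∀ n : ℕ,
    (f (x2 n) - f (x1 n) < 0 →
      x1 (n + 1) = x1 n - α * (x1 n - x2 n) * (1 - globalGrad f (x2 n) (x1 n)) ∧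
      x2 (n + 1) = x2 n) ∧
    (¬ (f (x2 n) - f (x1 n) < 0) →
      x1 (n + 1) = x1 n ∧
      x2 (n + 1) = x2 n - α * (x2 n - x1 n) * (1 + globalGrad f (x2 n) (x1 n)))

theorem sugd_lower_iterate_invariant
    (a b k : ℝ) (hab : a < b) (hk : 0 < k) (f : ℝ → ℝ)
    (hlip : ∀ x ∈ Icc a b, ∀ y ∈ Icc a b, |f x - f y| ≤ k * |x - y|)
    (xstar : ℝ) (hxa : a < xstar) (hxb : xstar < b)
    (hmin : ∀ x ∈ Icc a b, x ≠ xstar → f xstar < f x)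
    (ε : ℝ) (hε : 0 < ε)
    (α : ℝ) (hα0 : 0 ≤ α) (hαε : α ≤ ε / ((b - a) * (1 + k) * k))
    (x1 x2 : ℝ) (hx1 : x1 ∈ Icc a b) (hx2 : x2 ∈ Icc a b)
    (hlt : x1 < x2) (hstar : x1 < xstar)
    (hneg : f x2 - f x1 < 0) (hfar : f x1 - f xstar > ε) :
    x1 - α * (x1 - x2) * (1 - globalGrad f x2 x1) < xstar := by
  obtain ⟨ha1, hb1⟩ := hx1
  obtain ⟨ha2, hb2⟩ := hx2
  have hne : x1 - x2 ≠ 0 := by linarith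
  have key : α * (x1 - x2) * (1 - globalGrad f x2 x1)
      = α * ((x1 - x2) - (f x1 - f x2)) := by
    unfold globalGrad
    field_simp
  rw [key]
  have h1 := hlip x1 ⟨ha1, hb1⟩ x2 ⟨ha2, hb2⟩
  have h2 := hlip x1 ⟨ha1, hb1⟩ xstar ⟨hxa.le, hxb.le⟩
  rw [abs_of_neg (by linarith : x1 - x2 < 0)] at h1
  rw [abs_of_neg (by linarith : x1 - xstar < 0)] at h2
  have h1' : f x1 - f x2 ≤ k * (x2 - x1) := by
    have := le_abs_self (f x1 - f x2); linarith
  have h2' : ε < k * (xstar - x1) := by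
    have := le_abs_self (f x1 - f xstar); linarith
  have hden : 0 < (b - a) * (1 + k) * k := mul_pos (mul_pos (by linarith) (by linarith)) hk
  have hα' : α * ((b - a) * (1 + k) * k) ≤ ε := (le_div_iff₀ hden).mp hαε
  have hS : (x2 - x1) + (f x1 - f x2) ≤ (b - a) * (1 + k) := by nlinarith
  have hS0 : 0 ≤ (x2 - x1) + (f x1 - f x2) := by linarith
  have : α * ((x2 - x1) + (f x1 - f x2)) * k ≤ ε := by nlinarith
  nlinarith
end

section
/- One-step invariant for the upper iterate (Part 1 of the proof of Theorem 1): assume f attains a unique global minimum over [a,b] at x* with a < x* < b (f(x*) < f(x) for all x ∈ [a,b], x ≠ x*). Let ε > 0 and 0 ≤ α ≤ ε/((b-a)·(1+k)·k). If x1, x2 ∈ [a,b] satisfy x1 < x2, x2 > x*, f(x2) - f(x1) ≥ 0, and f(x2) - f(x*) > ε, then the updated point x2' = x2 - α·(x2 - x1)·(1 + F(x2,x1)) still satisfies x2' > x*. -/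
/-! Since `F(x2,x1) ≤ k`, the step `α (x2 - x1) (1 + F(x2,x1))` is at most `α (b - a) (1 + k) ≤ ε / k`,
while `ε < f x2 - f x* ≤ k (x2 - x*)` gives `x2 - x* > ε / k`. -/

open Set Filter Topology

section Lipschitz

variable {f : ℝ → ℝ} {s : Set ℝ} {k x y : ℝ}

theorem abs_globalGrad_le (hlip : ∀ x ∈ s, ∀ y ∈ s, |f x - f y| ≤ k * |x - y|)
    (hx : x ∈ s) (hy : y ∈ s) (hxy : x ≠ y) : |globalGrad f x y| ≤ k := by
  rw [globalGrad, abs_div, div_le_iff₀ (abs_pos.2 (sub_ne_zero.2 hxy.symm))]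
  exact hlip y hy x hx

theorem div_lt_sub_of_lt_sub_of_lipschitz (hlip : ∀ x ∈ s, ∀ y ∈ s, |f x - f y| ≤ k * |x - y|)
    (hk : 0 < k) (hx : x ∈ s) (hy : y ∈ s) (hyx : y < x) {ε : ℝ} (hε : ε < f x - f y) :
    ε / k < x - y := by
  rw [div_lt_iff₀ hk]
  calc ε < f x - f y := hε
    _ ≤ |f x - f y| := le_abs_self _
    _ ≤ k * |x - y| := hlip x hx y hy
    _ = (x - y) * k := by rw [abs_of_pos (sub_pos.2 hyx), mul_comm]

end Lipschitz

theorem mul_mul_one_add_le_div {a b k α ε d F : ℝ} (hab : a < b) (hk : 0 < k) (hα0 : 0 ≤ α)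
    (hαε : α ≤ ε / ((b - a) * (1 + k) * k)) (hd0 : 0 ≤ d) (hdab : d ≤ b - a) (hF : F ≤ k) :
    α * d * (1 + F) ≤ ε / k := by
  have hba : 0 < b - a := sub_pos.2 hab
  calc α * d * (1 + F) ≤ α * d * (1 + k) := by gcongr
    _ ≤ α * (b - a) * (1 + k) := by gcongr
    _ ≤ ε / ((b - a) * (1 + k) * k) * ((b - a) * (1 + k)) := by
      rw [mul_assoc]; gcongr
    _ = ε / k := by field_simp

theorem sugd_upper_iterate_invariant_general
    (a b k : ℝ) (hab : a < b) (hk : 0 < k) (f : ℝ → ℝ)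
    (hlip : ∀ x ∈ Icc a b, ∀ y ∈ Icc a b, |f x - f y| ≤ k * |x - y|)
    (xstar : ℝ) (hxa : a < xstar) (hxb : xstar < b)
    (ε : ℝ)
    (α : ℝ) (hα0 : 0 ≤ α) (hαε : α ≤ ε / ((b - a) * (1 + k) * k))
    (x1 x2 : ℝ) (hx1 : x1 ∈ Icc a b) (hx2 : x2 ∈ Icc a b)
    (hlt : x1 < x2) (hstar : xstar < x2)
    (hfar : f x2 - f xstar > ε) :
    xstar < x2 - α * (x2 - x1) * (1 + globalGrad f x2 x1) := by
  have hF : globalGrad f x2 x1 ≤ k :=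
    (le_abs_self _).trans (abs_globalGrad_le hlip hx2 hx1 hlt.ne')
  have hstep : α * (x2 - x1) * (1 + globalGrad f x2 x1) ≤ ε / k :=
    mul_mul_one_add_le_div hab hk hα0 hαε (sub_nonneg.2 hlt.le) (by linarith [hx1.1, hx2.2]) hF
  have hgap : ε / k < x2 - xstar :=
    div_lt_sub_of_lt_sub_of_lipschitz hlip hk hx2 ⟨hxa.le, hxb.le⟩ hstar hfar
  linarith

theorem sugd_upper_iterate_invariant
    (a b k : ℝ) (hab : a < b) (hk : 0 < k) (f : ℝ → ℝ)
    (hlip : ∀ x ∈ Icc a b, ∀ y ∈ Icc a b, |f x - f y| ≤ k * |x - y|)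
    (xstar : ℝ) (hxa : a < xstar) (hxb : xstar < b)
    (hmin : ∀ x ∈ Icc a b, x ≠ xstar → f xstar < f x)
    (ε : ℝ) (hε : 0 < ε)
    (α : ℝ) (hα0 : 0 ≤ α) (hαε : α ≤ ε / ((b - a) * (1 + k) * k))
    (x1 x2 : ℝ) (hx1 : x1 ∈ Icc a b) (hx2 : x2 ∈ Icc a b)
    (hlt : x1 < x2) (hstar : xstar < x2)
    (hge : 0 ≤ f x2 - f x1) (hfar : f x2 - f xstar > ε) :
    xstar < x2 - α * (x2 - x1) * (1 + globalGrad f x2 x1) :=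
  sugd_upper_iterate_invariant_general a b k hab hk f hlip xstar hxa hxb ε α hα0 hαε x1 x2 hx1 hx2
    hlt hstar hfar
end

section
/- Bracketing invariant (Part 1 of the proof of Theorem 1, by induction): assume f attains a unique global minimum over [a,b] at x* with a < x* < b (f(x*) < f(x) for all x ∈ [a,b], x ≠ x*). Let ε > 0 and 0 < α ≤ ε/((b-a)·(1+k)·k). Then for every n ∈ ℕ, if for all m < n both f(x1(m)) - f(x*) > ε and f(x2(m)) - f(x*) > ε, then a ≤ x1(n) < x* < x2(n) ≤ b. -/
open Set Filter Topology

theorem sugd_bracketing_invariant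
    (a b k : ℝ) (hab : a < b) (hk : 0 < k) (f : ℝ → ℝ)
    (hlip : ∀ x ∈ Icc a b, ∀ y ∈ Icc a b, |f x - f y| ≤ k * |x - y|)
    (xstar : ℝ) (hxa : a < xstar) (hxb : xstar < b)
    (hmin : ∀ x ∈ Icc a b, x ≠ xstar → f xstar < f x)
    (ε : ℝ) (hε : 0 < ε)
    (α : ℝ) (hα0 : 0 < α) (hαε : α ≤ ε / ((b - a) * (1 + k) * k))
    (x1 x2 : ℕ → ℝ) (hsugd : IsSuGD f a b α x1 x2) :
    ∀ n : ℕ,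
      (∀ m < n, f (x1 m) - f xstar > ε ∧ f (x2 m) - f xstar > ε) →
      a ≤ x1 n ∧ x1 n < xstar ∧ xstar < x2 n ∧ x2 n ≤ b := by

  obtain ⟨h10, h20, hstep⟩ := hsugd
  have hpos : 0 < (b - a) * (1 + k) * k := by
    apply mul_pos (mul_pos (by linarith) (by linarith)) hk
  have hα' : α * ((b - a) * (1 + k) * k) ≤ ε := by
    rw [← le_div_iff₀ hpos]; exact hαε
  intro n
  induction n with
  | zero =>
    intro _
    rw [h10, h20]
    exact ⟨le_refl a, hxa, hxb, le_refl b⟩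
  | succ n ih =>
    intro h
    obtain ⟨ha1, h1s, hs2, h2b⟩ := ih (fun m hm => h m (Nat.lt_succ_of_lt hm))
    obtain ⟨hε1, hε2⟩ := h n (Nat.lt_succ_self n)
    have h12 : x1 n < x2 n := h1s.trans hs2
    have hne : x1 n - x2 n ≠ 0 := by linarith
    have hx1b : x1 n ≤ b := by linarith
    have hx2a : a ≤ x2 n := by linarith
    have hx1mem : x1 n ∈ Icc a b := ⟨ha1, hx1b⟩
    have hx2mem : x2 n ∈ Icc a b := ⟨hx2a, h2b⟩
    have hxsmem : xstar ∈ Icc a b := ⟨hxa.le, hxb.le⟩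
    have hA : f (x1 n) - f (x2 n) ≤ k * (x2 n - x1 n) := by
      have := hlip (x1 n) hx1mem (x2 n) hx2mem
      rw [abs_of_neg (by linarith : x1 n - x2 n < 0)] at this
      calc f (x1 n) - f (x2 n) ≤ |f (x1 n) - f (x2 n)| := le_abs_self _
        _ ≤ k * -(x1 n - x2 n) := this
        _ = k * (x2 n - x1 n) := by ring
    have hB : f (x2 n) - f (x1 n) ≤ k * (x2 n - x1 n) := by
      have := hlip (x2 n) hx2mem (x1 n) hx1mem
      rw [abs_of_pos (by linarith : (0:ℝ) < x2 n - x1 n)] at this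
      calc f (x2 n) - f (x1 n) ≤ |f (x2 n) - f (x1 n)| := le_abs_self _
        _ ≤ k * (x2 n - x1 n) := this
    have hC1 : f (x1 n) - f xstar ≤ k * (xstar - x1 n) := by
      have := hlip (x1 n) hx1mem xstar hxsmem
      rw [abs_of_neg (by linarith : x1 n - xstar < 0)] at this
      calc f (x1 n) - f xstar ≤ |f (x1 n) - f xstar| := le_abs_self _
        _ ≤ k * -(x1 n - xstar) := this
        _ = k * (xstar - x1 n) := by ring
    have hC2 : f (x2 n) - f xstar ≤ k * (x2 n - xstar) := by
      have := hlip (x2 n) hx2mem xstar hxsmem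
      rw [abs_of_pos (by linarith : (0:ℝ) < x2 n - xstar)] at this
      calc f (x2 n) - f xstar ≤ |f (x2 n) - f xstar| := le_abs_self _
        _ ≤ k * (x2 n - xstar) := this
    have hD : x2 n - x1 n ≤ b - a := by linarith
    by_cases hcase : f (x2 n) - f (x1 n) < 0
    · obtain ⟨e1, e2⟩ := (hstep n).1 hcase
      have hx1' : x1 (n + 1) = x1 n + α * ((x2 n - x1 n) + (f (x1 n) - f (x2 n))) := by
        rw [e1, globalGrad]; field_simp; ring
      set e := α * ((x2 n - x1 n) + (f (x1 n) - f (x2 n))) with he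
      have he0 : 0 < e := by
        apply mul_pos hα0; linarith
      have hek : e * k ≤ ε := by
        have h1 : (x2 n - x1 n) + (f (x1 n) - f (x2 n)) ≤ (b - a) * (1 + k) := by
          nlinarith
        calc e * k ≤ (α * ((b - a) * (1 + k))) * k := by
              apply mul_le_mul_of_nonneg_right _ hk.le
              exact mul_le_mul_of_nonneg_left h1 hα0.le
          _ = α * ((b - a) * (1 + k) * k) := by ring
          _ ≤ ε := hα'
      have hgap : ε < k * (xstar - x1 n) := lt_of_lt_of_le hε1 hC1
      have helt : e < xstar - x1 n :=
        lt_of_mul_lt_mul_right (by linarith : e * k < (xstar - x1 n) * k) hk.le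
      rw [hx1', e2]
      refine ⟨by linarith, by linarith, hs2, h2b⟩
    · obtain ⟨e1, e2⟩ := (hstep n).2 hcase
      have hx2' : x2 (n + 1) = x2 n - α * ((x2 n - x1 n) + (f (x2 n) - f (x1 n))) := by
        rw [e2, globalGrad]; field_simp; ring
      set e := α * ((x2 n - x1 n) + (f (x2 n) - f (x1 n))) with he
      push_neg at hcase
      have he0 : 0 < e := by
        apply mul_pos hα0; linarith
      have hek : e * k ≤ ε := by
        have h1 : (x2 n - x1 n) + (f (x2 n) - f (x1 n)) ≤ (b - a) * (1 + k) := by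
          nlinarith
        calc e * k ≤ (α * ((b - a) * (1 + k))) * k := by
              apply mul_le_mul_of_nonneg_right _ hk.le
              exact mul_le_mul_of_nonneg_left h1 hα0.le
          _ = α * ((b - a) * (1 + k) * k) := by ring
          _ ≤ ε := hα'
      have hgap : ε < k * (x2 n - xstar) := lt_of_lt_of_le hε2 hC2
      have helt : e < x2 n - xstar :=
        lt_of_mul_lt_mul_right (by linarith : e * k < (x2 n - xstar) * k) hk.le
      rw [hx2', e1]
      refine ⟨ha1, h1s, by linarith, by linarith⟩
end

section
/- Monotonicity and convergence of the SuGD iterates (Part 2 of the proof of Theorem 1): let α > 0 and suppose the SuGD sequences satisfy x1(n) < x2(n) and x1(n), x2(n) ∈ [a,b] for all n ∈ ℕ. Then (x1(n)) is monotone nondecreasing and (x2(n)) is monotone nonincreasing; hence x1(n) converges to some limit l1 and x2(n) converges to some limit l2, with a ≤ l1 ≤ l2 ≤ b. -/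
open Set Filter Topology

theorem sugd_monotone_and_convergent
    (a b k : ℝ) (hab : a < b) (hk : 0 < k) (f : ℝ → ℝ)
    (hlip : ∀ x ∈ Icc a b, ∀ y ∈ Icc a b, |f x - f y| ≤ k * |x - y|)
    (α : ℝ) (hα : 0 < α)
    (x1 x2 : ℕ → ℝ) (hsugd : IsSuGD f a b α x1 x2)
    (hsep : ∀ n : ℕ, x1 n < x2 n)
    (hmem : ∀ n : ℕ, x1 n ∈ Icc a b ∧ x2 n ∈ Icc a b) :
    Monotone x1 ∧ Antitone x2 ∧
    ∃ l1 l2 : ℝ, Tendsto x1 atTop (𝓝 l1) ∧ Tendsto x2 atTop (𝓝 l2) ∧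
      a ≤ l1 ∧ l1 ≤ l2 ∧ l2 ≤ b := by
  obtain ⟨h0, h1, hstep⟩ := hsugd
  have key : ∀ n, x1 n ≤ x1 (n + 1) ∧ x2 (n + 1) ≤ x2 n := by
    intro n
    have hlt := hsep n
    have hd : x1 n - x2 n < 0 := by linarith
    by_cases hc : f (x2 n) - f (x1 n) < 0
    · obtain ⟨e1, e2⟩ := (hstep n).1 hc
      have hF : globalGrad f (x2 n) (x1 n) < 0 := by
        unfold globalGrad
        apply div_neg_of_pos_of_neg <;> linarith
      have : 0 < -(α * (x1 n - x2 n) * (1 - globalGrad f (x2 n) (x1 n))) := by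
        have := mul_pos (mul_pos hα (by linarith : (0:ℝ) < x2 n - x1 n))
          (by linarith : (0:ℝ) < 1 - globalGrad f (x2 n) (x1 n))
        nlinarith
      constructor
      · rw [e1]; linarith
      · rw [e2]
    · obtain ⟨e1, e2⟩ := (hstep n).2 hc
      push_neg at hc
      have hF : 0 ≤ globalGrad f (x2 n) (x1 n) := by
        unfold globalGrad
        apply div_nonneg_of_nonpos <;> linarith
      have : 0 < α * (x2 n - x1 n) * (1 + globalGrad f (x2 n) (x1 n)) := by
        apply mul_pos (mul_pos hα (by linarith)); linarith
      exact ⟨le_of_eq e1.symm, by rw [e2]; linarith⟩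
  have hmono : Monotone x1 := monotone_nat_of_le_succ fun n => (key n).1
  have hanti : Antitone x2 := antitone_nat_of_succ_le fun n => (key n).2
  refine ⟨hmono, hanti, ?_⟩
  have hbdd1 : BddAbove (Set.range x1) := ⟨b, by rintro _ ⟨n, rfl⟩; exact (hmem n).1.2⟩
  have hbdd2 : BddBelow (Set.range x2) := ⟨a, by rintro _ ⟨n, rfl⟩; exact (hmem n).2.1⟩
  have ht1 := tendsto_atTop_ciSup hmono hbdd1
  have ht2 := tendsto_atTop_ciInf hanti hbdd2
  refine ⟨_, _, ht1, ht2, ?_, ?_, ?_⟩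
  · have := ge_of_tendsto' ht1 (fun n => by
      calc a = x1 0 := h0.symm
      _ ≤ x1 n := hmono (Nat.zero_le n))
    exact this
  · exact le_of_tendsto_of_tendsto' ht1 ht2 fun n => (hsep n).le
  · exact le_of_tendsto' ht2 (fun n => by
      calc x2 n ≤ x2 0 := hanti (Nat.zero_le n)
      _ = b := h1)
end

section
/- Common limit of the SuGD iterates (Part 2 of the proof of Theorem 1): let α > 0 and suppose the SuGD sequences satisfy x1(n) < x2(n) and x1(n), x2(n) ∈ [a,b] for all n ∈ ℕ, and that x1(n) converges to l1 and x2(n) converges to l2. Then l1 = l2; i.e. the two sequences are adjacent and converge to a common limit. -/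
open Set Filter Topology

theorem sugd_common_limit
    (a b k : ℝ) (hab : a < b) (hk : 0 < k) (f : ℝ → ℝ)
    (hlip : ∀ x ∈ Icc a b, ∀ y ∈ Icc a b, |f x - f y| ≤ k * |x - y|)
    (α : ℝ) (hα : 0 < α)
    (x1 x2 : ℕ → ℝ) (hsugd : IsSuGD f a b α x1 x2)
    (hsep : ∀ n : ℕ, x1 n < x2 n)
    (hmem : ∀ n : ℕ, x1 n ∈ Icc a b ∧ x2 n ∈ Icc a b)
    (l1 l2 : ℝ)
    (hl1 : Tendsto x1 atTop (𝓝 l1)) (hl2 : Tendsto x2 atTop (𝓝 l2)) :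
    l1 = l2 := by
  obtain ⟨h0a, h0b, hrec⟩ := hsugd
  have key : ∀ n, x2 (n+1) - x1 (n+1) ≤ (1-α) * (x2 n - x1 n) := by
    intro n
    obtain ⟨h1, h2⟩ := hrec n
    have hd : 0 < x2 n - x1 n := sub_pos.2 (hsep n)
    by_cases hc : f (x2 n) - f (x1 n) < 0
    · obtain ⟨e1, e2⟩ := h1 hc
      have hF : globalGrad f (x2 n) (x1 n) ≤ 0 := by
        unfold globalGrad
        apply div_nonpos_of_nonneg_of_nonpos <;> linarith
      rw [e1, e2]
      nlinarith [mul_nonneg (mul_nonneg hα.le hd.le) (neg_nonneg.2 hF)]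
    · obtain ⟨e1, e2⟩ := h2 hc
      push_neg at hc
      have hF : 0 ≤ globalGrad f (x2 n) (x1 n) := by
        unfold globalGrad
        rw [div_nonneg_iff]; right; constructor <;> linarith
      rw [e1, e2]
      nlinarith [mul_nonneg (mul_nonneg hα.le hd.le) hF]
  have hd0 : ∀ n, 0 < x2 n - x1 n := fun n => sub_pos.2 (hsep n)
  have hα1 : α < 1 := by
    have := key 0
    nlinarith [hd0 0, hd0 1]
  have hbound : ∀ n, x2 n - x1 n ≤ (1-α)^n * (x2 0 - x1 0) := by
    intro n
    induction n with
    | zero => simp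
    | succ m ih =>
      calc x2 (m+1) - x1 (m+1) ≤ (1-α) * (x2 m - x1 m) := key m
        _ ≤ (1-α) * ((1-α)^m * (x2 0 - x1 0)) := by
            apply mul_le_mul_of_nonneg_left ih (by linarith)
        _ = (1-α)^(m+1) * (x2 0 - x1 0) := by ring
  have hlim : Tendsto (fun n => (1-α)^n * (x2 0 - x1 0)) atTop (𝓝 0) := by
    have hp : Tendsto (fun n : ℕ => (1-α)^n) atTop (𝓝 0) :=
      tendsto_pow_atTop_nhds_zero_of_lt_one (by linarith) (by linarith)
    simpa using hp.mul_const (x2 0 - x1 0)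
  have hdl : Tendsto (fun n => x2 n - x1 n) atTop (𝓝 (l2 - l1)) := hl2.sub hl1
  have h1 : l2 - l1 ≤ 0 := le_of_tendsto_of_tendsto' hdl hlim hbound
  have h2 : 0 ≤ l2 - l1 :=
    le_of_tendsto_of_tendsto' tendsto_const_nhds hdl (fun n => (hd0 n).le)
  linarith
end
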